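/- If n ≥ 3 is odd and k ≥ 3, then the minimum size of a doubly resolving set of the Cartesian product C_n □ P_k is 3. -/

import Mathlib

open SimpleGraph

/-- `Q` is a resolving set of `G`: distinct vertices have distinct distance vectors to `Q`. -/
def IsResolving {V : Type*} (G : SimpleGraph V) (Q : Finset V) : Prop :=
  ∀ x y : V, (∀ q ∈ Q, G.dist x q = G.dist y q) → x = y

/-- `Q` is a doubly resolving set of `G`. -/
def IsDoublyResolving {V : Type*} (G : SimpleGraph V) (Q : Finset V) : Prop :=
  ∀ x y : V, x ≠ y → ∃ u ∈ Q, ∃ v ∈ Q,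
    (G.dist x u : ℤ) - (G.dist x v : ℤ) ≠ (G.dist y u : ℤ) - (G.dist y v : ℤ)

/-- `Q` is a strong resolving set of `G`: for distinct `p q` some `r ∈ Q` has
`p` on a shortest `q`–`r` path or `q` on a shortest `p`–`r` path. -/
def IsStrongResolving {V : Type*} (G : SimpleGraph V) (Q : Finset V) : Prop :=
  ∀ p q : V, p ≠ q → ∃ r ∈ Q,
    G.dist q r = G.dist q p + G.dist p r ∨ G.dist p r = G.dist p q + G.dist q r

section Aux

variable {α β : Type*} {G : SimpleGraph α} {H : SimpleGraph β}

lemma DR.boxProd_walk_le (hG : G.Connected) (hH : H.Connected) :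
    ∀ {x y : α × β} (w : (G □ H).Walk x y), G.dist x.1 y.1 + H.dist x.2 y.2 ≤ w.length := by
  intro x y w
  induction w with
  | nil => simp
  | @cons u v y h p ih =>
    rw [boxProd_adj] at h
    rw [Walk.length_cons]
    rcases h with ⟨h1, h2⟩ | ⟨h1, h2⟩
    · have t1 : G.dist u.1 y.1 ≤ G.dist u.1 v.1 + G.dist v.1 y.1 := hG.dist_triangle
      have t2 : G.dist u.1 v.1 ≤ 1 := by
        rw [← dist_eq_one_iff_adj] at h1; omega
      rw [h2]
      omega
    · have t1 : H.dist u.2 y.2 ≤ H.dist u.2 v.2 + H.dist v.2 y.2 := hH.dist_triangle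
      have t2 : H.dist u.2 v.2 ≤ 1 := by
        rw [← dist_eq_one_iff_adj] at h1; omega
      rw [h2]
      omega

lemma DR.boxProd_dist (hG : G.Connected) (hH : H.Connected) (x y : α × β) :
    (G □ H).dist x y = G.dist x.1 y.1 + H.dist x.2 y.2 := by
  refine le_antisymm ?_ ?_
  · obtain ⟨w1, hw1⟩ := hG.exists_walk_length_eq_dist x.1 y.1
    obtain ⟨w2, hw2⟩ := hH.exists_walk_length_eq_dist x.2 y.2
    have := dist_le ((w1.boxProdLeft H x.2).append (w2.boxProdRight G y.1))
    rw [Walk.length_append, show (w1.boxProdLeft H x.2).length = w1.length from Walk.length_map _ _,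
      show (w2.boxProdRight G y.1).length = w2.length from Walk.length_map _ _] at this
    simpa [Walk.boxProdLeft, Walk.boxProdRight, Walk.length_map, hw1, hw2] using this
  · obtain ⟨w, hw⟩ := ((hG.boxProd hH).exists_walk_length_eq_dist x y)
    have := DR.boxProd_walk_le hG hH w
    omega

end Aux

lemma DR.pathGraph_walk_le {k : ℕ} : ∀ {b d : Fin k} (w : (pathGraph k).Walk b d),
    Nat.dist b.val d.val ≤ w.length := by
  intro b d w
  induction w with
  | nil => simp [Nat.dist]
  | @cons u v y h p ih =>
    rw [pathGraph_adj] at h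
    rw [Walk.length_cons]
    simp only [Nat.dist] at *
    omega

lemma DR.pathGraph_dist_le {k : ℕ} : ∀ (e : ℕ) (i j : Fin k), i.val + e = j.val →
    (pathGraph k).dist i j ≤ e := by
  intro e
  induction e with
  | zero => intro i j hij; have : i = j := Fin.ext (by omega); simp [this]
  | succ e ih =>
    intro i j hij
    have hconn : (pathGraph k).Connected := by
      match k with
      | 0 => exact absurd i.2 (by omega)
      | k + 1 => exact pathGraph_connected k
    have hi' : i.val + 1 < k := by have := j.2; omega
    set i' : Fin k := ⟨i.val + 1, hi'⟩ with hi'def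
    have hadj : (pathGraph k).Adj i i' := by rw [pathGraph_adj]; left; rfl
    have t1 : (pathGraph k).dist i j ≤ (pathGraph k).dist i i' + (pathGraph k).dist i' j :=
      hconn.dist_triangle
    have t2 : (pathGraph k).dist i i' ≤ 1 := by rw [← dist_eq_one_iff_adj] at hadj; omega
    have t3 : (pathGraph k).dist i' j ≤ e := ih i' j (by simp [hi'def]; omega)
    omega

lemma DR.pathGraph_dist {k : ℕ} (b d : Fin k) :
    (pathGraph k).dist b d = Nat.dist b.val d.val := by
  refine le_antisymm ?_ ?_
  · rcases le_or_gt b.val d.val with hbd | hbd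
    · have := DR.pathGraph_dist_le (d.val - b.val) b d (by omega)
      simp only [Nat.dist]; omega
    · have := DR.pathGraph_dist_le (b.val - d.val) d b (by omega)
      rw [SimpleGraph.dist_comm]
      simp only [Nat.dist]; omega
  · have hconn : (pathGraph k).Connected := by
      match k with
      | 0 => exact absurd b.2 (by omega)
      | k + 1 => exact pathGraph_connected k
    obtain ⟨w, hw⟩ := hconn.exists_walk_length_eq_dist b d
    have := DR.pathGraph_walk_le w
    omega

lemma DR.fin_sub_val {n : ℕ} (a b : Fin n) :
    (a - b).val = if b.val ≤ a.val then a.val - b.val else n + a.val - b.val := by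
  rw [Fin.sub_def]
  simp only []
  split_ifs with h
  · have h2 : n - b.val + a.val = n + (a.val - b.val) := by omega
    rw [h2, Nat.add_mod_left, Nat.mod_eq_of_lt (by omega)]
  · have h2 : n - b.val + a.val = n + a.val - b.val := by omega
    rw [h2, Nat.mod_eq_of_lt (by have := a.2; have := b.2; omega)]

/-- combinatorial distance on the cycle -/
def DR.cdist {n : ℕ} (a c : Fin n) : ℕ :=
  min (Nat.dist a.val c.val) (n - Nat.dist a.val c.val)

lemma DR.cdist_eq {m : ℕ} (a c : Fin (m + 3)) :
    DR.cdist a c = min ((c - a).val) ((a - c).val) := by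
  rw [DR.cdist, DR.fin_sub_val, DR.fin_sub_val]
  have := a.2; have := c.2
  simp only [Nat.dist]
  split_ifs <;> omega

lemma DR.cyc_adj_succ {m : ℕ} (a : Fin (m + 3)) : (cycleGraph (m + 3)).Adj a (a + 1) := by
  rw [cycleGraph_adj']
  right
  rw [add_sub_cancel_left]
  rfl

open Fin.NatCast Fin.CommRing in
lemma DR.cyc_dist_le {m : ℕ} : ∀ (d : ℕ) (a : Fin (m + 3)),
    (cycleGraph (m + 3)).dist a (a + (d : Fin (m + 3))) ≤ d := by
  intro d
  induction d with
  | zero => intro a; simp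
  | succ d ih =>
    intro a
    have hconn : (cycleGraph (m + 3)).Connected := cycleGraph_connected
    have he : a + (((d + 1 : ℕ)) : Fin (m + 3)) = (a + 1) + (d : Fin (m + 3)) := by
      push_cast; ring
    rw [he]
    have hadj := DR.cyc_adj_succ a
    rw [← dist_eq_one_iff_adj] at hadj
    have t1 := hconn.dist_triangle (u := a) (v := a + 1) (w := (a + 1) + (d : Fin (m+3)))
    have := ih (a + 1)
    omega

open Fin.NatCast Fin.CommRing in
lemma DR.cyc_dist_le_cdist {m : ℕ} (a c : Fin (m + 3)) :
    (cycleGraph (m + 3)).dist a c ≤ DR.cdist a c := by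
  rw [DR.cdist_eq]
  refine le_min ?_ ?_
  · have h : a + (((c - a).val : ℕ) : Fin (m + 3)) = c := by
      rw [Fin.cast_val_eq_self]; ring
    have := DR.cyc_dist_le ((c - a).val) a
    rwa [h] at this
  · have h : c + (((a - c).val : ℕ) : Fin (m + 3)) = a := by
      rw [Fin.cast_val_eq_self]; ring
    have := DR.cyc_dist_le ((a - c).val) c
    rw [h] at this
    rwa [SimpleGraph.dist_comm]

lemma DR.cyc_walk_le {m : ℕ} : ∀ {a c : Fin (m + 3)} (w : (cycleGraph (m + 3)).Walk a c),
    DR.cdist a c ≤ w.length := by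
  intro a c w
  induction w with
  | nil => simp [DR.cdist, Nat.dist]
  | @cons u v y h p ih =>
    rw [cycleGraph_adj'] at h
    rw [Walk.length_cons]
    have key : DR.cdist u y ≤ DR.cdist v y + 1 := by
      rw [DR.cdist_eq, DR.cdist_eq] at *
      rw [DR.fin_sub_val, DR.fin_sub_val, DR.fin_sub_val, DR.fin_sub_val] at *
      have := u.2; have := v.2; have := y.2
      split_ifs at * <;> omega
    omega

lemma DR.cyc_dist_eq {m : ℕ} (a c : Fin (m + 3)) :
    (cycleGraph (m + 3)).dist a c = DR.cdist a c := by
  refine le_antisymm (DR.cyc_dist_le_cdist a c) ?_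
  have hconn : (cycleGraph (m + 3)).Connected := cycleGraph_connected
  obtain ⟨w, hw⟩ := hconn.exists_walk_length_eq_dist a c
  have := DR.cyc_walk_le w
  omega

lemma DR.prod_dist {m K : ℕ} (x y : Fin (m + 3) × Fin (K + 3)) :
    (cycleGraph (m + 3) □ pathGraph (K + 3)).dist x y
      = DR.cdist x.1 y.1 + Nat.dist x.2.val y.2.val := by
  have hc : (cycleGraph (m + 3)).Connected := cycleGraph_connected
  have hp : (pathGraph (K + 3)).Connected := pathGraph_connected (K + 2)
  rw [DR.boxProd_dist hc hp, DR.cyc_dist_eq, DR.pathGraph_dist]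

lemma DR.key_inj (n w a c : ℕ) (hn : n = 2*w+1) (ha : a < n) (hc : c < n)
    (E : min a (n - a) + min (Nat.dist c w) (n - Nat.dist c w)
       = min c (n - c) + min (Nat.dist a w) (n - Nat.dist a w)) : a = c := by
  simp only [Nat.dist, min_def] at E
  split_ifs at E <;> omega

theorem stmt8 (n k : ℕ) (hn : 3 ≤ n) (ho : Odd n) (hk : 3 ≤ k) :
    IsLeast {m : ℕ | ∃ Q, IsDoublyResolving (cycleGraph n □ pathGraph k) Q ∧ Q.card = m} (3) := by
  obtain ⟨N, rfl⟩ : ∃ N, n = N + 3 := ⟨n - 3, by omega⟩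
  obtain ⟨K, rfl⟩ : ∃ K, k = K + 3 := ⟨k - 3, by omega⟩
  obtain ⟨w, hw⟩ := ho
  constructor
  · -- membership : there is a doubly resolving set of size 3
    refine ⟨({((⟨0, Nat.succ_pos _⟩ : Fin (N+3)), (⟨0, Nat.succ_pos _⟩ : Fin (K+3))),
        (⟨(N+3)/2, Nat.div_lt_self (Nat.succ_pos _) one_lt_two⟩, ⟨0, Nat.succ_pos _⟩),
        (⟨(N+3)/2, Nat.div_lt_self (Nat.succ_pos _) one_lt_two⟩, ⟨K+2, Nat.lt_succ_self _⟩)} :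
        Finset (Fin (N+3) × Fin (K+3))), ?_, ?_⟩
    · intro x y hxy
      by_contra hcon
      push_neg at hcon
      obtain ⟨a, b⟩ := x
      obtain ⟨c, d⟩ := y
      have E1 := hcon (⟨0, Nat.succ_pos _⟩, ⟨0, Nat.succ_pos _⟩) (by simp)
        (⟨(N+3)/2, Nat.div_lt_self (Nat.succ_pos _) one_lt_two⟩, ⟨0, Nat.succ_pos _⟩) (by simp)
      have E2 := hcon (⟨0, Nat.succ_pos _⟩, ⟨0, Nat.succ_pos _⟩) (by simp)
        (⟨(N+3)/2, Nat.div_lt_self (Nat.succ_pos _) one_lt_two⟩, ⟨K+2, Nat.lt_succ_self _⟩)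
        (by simp)
      simp only [DR.prod_dist] at E1 E2
      rw [sub_eq_sub_iff_add_eq_add, ← Nat.cast_add, ← Nat.cast_add, Nat.cast_inj] at E1 E2
      have hhalf : (N+3)/2 = w := by omega
      simp only [DR.cdist, Nat.dist_zero_right, hhalf] at E1 E2
      have ha := a.2; have hb := b.2; have hc := c.2; have hd := d.2
      clear hcon
      obtain ⟨M1, hM1⟩ : ∃ m, min (a.val) (N+3 - a.val) = m := ⟨_, rfl⟩
      obtain ⟨M2, hM2⟩ : ∃ m, min (Nat.dist c.val w) (N+3 - Nat.dist c.val w) = m := ⟨_, rfl⟩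
      obtain ⟨M3, hM3⟩ : ∃ m, min (c.val) (N+3 - c.val) = m := ⟨_, rfl⟩
      obtain ⟨M4, hM4⟩ : ∃ m, min (Nat.dist a.val w) (N+3 - Nat.dist a.val w) = m := ⟨_, rfl⟩
      rw [hM1, hM2, hM3, hM4] at E1 E2
      simp only [Nat.dist] at E2
      have hM : M1 + M2 = M3 + M4 := by omega
      have hbd : b.val = d.val := by omega
      have hac : a.val = c.val :=
        DR.key_inj (N+3) w a.val c.val hw a.2 c.2 (by rw [hM1, hM2, hM3, hM4]; exact hM)
      exact hxy (Prod.ext (Fin.ext hac) (Fin.ext hbd))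
    · rw [Finset.card_insert_of_notMem, Finset.card_insert_of_notMem,
        Finset.card_singleton]
      · simp only [Finset.mem_singleton, Prod.mk.injEq, Fin.mk.injEq]
        omega
      · simp only [Finset.mem_insert, Finset.mem_singleton, Prod.mk.injEq, Fin.mk.injEq]
        push_neg
        omega
  · -- lower bound : every doubly resolving set has at least 3 elements
    rintro M ⟨Q, hQ, rfl⟩
    by_contra hlt
    push_neg at hlt
    have hcard2 : Q.card ≤ 2 := by omega
    have hVcard : 2 ≤ Fintype.card (Fin (N+3) × Fin (K+3)) := by
      simp only [Fintype.card_prod, Fintype.card_fin]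
      nlinarith
    obtain ⟨T, hQT, hT2⟩ := Finset.exists_superset_card_eq hcard2 hVcard
    obtain ⟨u, v, huv, rfl⟩ := Finset.card_eq_two.mp hT2
    have hcyc : (cycleGraph (N+3)).Connected := cycleGraph_connected
    have hpath : (pathGraph (K+3)).Connected := pathGraph_connected (K + 2)
    have hconn : (cycleGraph (N+3) □ pathGraph (K+3)).Connected := hcyc.boxProd hpath
    set G := cycleGraph (N+3) □ pathGraph (K+3) with hG
    have hinj : ∀ x y : Fin (N+3) × Fin (K+3),
        (G.dist x u : ℤ) - G.dist x v = (G.dist y u : ℤ) - G.dist y v → x = y := by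
      intro x y hf
      by_contra hxy
      obtain ⟨u', hu', v', hv', hne⟩ := hQ x y hxy
      have hu'' := hQT hu'
      have hv'' := hQT hv'
      simp only [Finset.mem_insert, Finset.mem_singleton] at hu'' hv''
      rcases hu'' with rfl | rfl <;> rcases hv'' with rfl | rfl
      · simp at hne
      · exact hne hf
      · apply hne; linarith
      · simp at hne
    have hbound : ∀ x : Fin (N+3) × Fin (K+3),
        (G.dist x u : ℤ) - G.dist x v
          ∈ Finset.Icc (-((N+3)/2 + (K+2) : ℤ)) ((N+3)/2 + (K+2)) := by
      intro x
      have hDuv : G.dist u v ≤ (N+3)/2 + (K+2) := by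
        rw [hG, DR.prod_dist]
        simp only [DR.cdist, Nat.dist, min_def]
        have := u.1.2; have := v.1.2; have := u.2.2; have := v.2.2
        split_ifs <;> omega
      have t1 : G.dist x u ≤ G.dist x v + G.dist v u := hconn.dist_triangle
      have t2 : G.dist x v ≤ G.dist x u + G.dist u v := hconn.dist_triangle
      have t3 : G.dist v u = G.dist u v := SimpleGraph.dist_comm
      simp only [Finset.mem_Icc]
      omega
    have hcle := Finset.card_le_card_of_injOn (s := Finset.univ)
      (fun x => (G.dist x u : ℤ) - G.dist x v)
      (fun x _ => hbound x) (fun x _ y _ h => hinj x y h)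
    rw [Finset.card_univ, Fintype.card_prod, Fintype.card_fin, Fintype.card_fin,
      Int.card_Icc] at hcle
    have hexp : (N+3) * (K+3) = 2*w*K + 6*w + K + 3 := by
      have h3 : N + 3 = 2*w + 1 := hw
      calc (N+3) * (K+3) = (2*w+1) * (K+3) := by rw [h3]
        _ = 2*w*K + 6*w + K + 3 := by ring
    have hw1 : 1 ≤ w := by omega
    have hK2 : K ≤ 2*w*K := Nat.le_mul_of_pos_left K (by omega)
    omega
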